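/- Completeness of FBI+cut: for any well-formed unfocused polarised sequent Γ ⊢ N, if the depolarised nested sequent ⌊Γ⌋ ⊢ ⌊N⌋ is provable in ηLBI, then Γ ⊢ N is provable in FBI+cut. -/

import Mathlib

namespace BIPaper

/-- Formulas of BI: `φ ::= ⊤ | ⊥ | I | A | φ∧φ | φ∨φ | φ→φ | φ∗φ | φ−∗φ`. -/
inductive Formula : Type where
  | atom (a : ℕ)
  | top
  | bot
  | unit
  | and (φ ψ : Formula)
  | or (φ ψ : Formula)
  | imp (φ ψ : Formula)
  | star (φ ψ : Formula)
  | wand (φ ψ : Formula)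
/-- Two-sorted nests (with leaves of type `α`), represented as finite-branching
trees whose `plus`/`times` nodes carry lists; lists are regarded as multisets
via the equivalence `NestEq` below, which plays the role of equality of
two-sorted nested multisets. -/
inductive Nest (α : Type) : Type where
  | frm (a : α)
  | plus (l : List (Nest α))
  | times (l : List (Nest α))

variable {α β : Type}

def Nest.flatP : Nest α → List (Nest α)
  | .plus l => l
  | x => [x]

def Nest.flatT : Nest α → List (Nest α)
  | .times l => l
  | x => [x]

/-- Smart additive multiset constructor: merges additive children into the
ambient additive multiset and promotes singletons. -/
def nplus (l : List (Nest α)) : Nest α :=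
  match l.flatMap Nest.flatP with
  | [x] => x
  | l' => .plus l'

/-- Smart multiplicative multiset constructor. -/
def ntimes (l : List (Nest α)) : Nest α :=
  match l.flatMap Nest.flatT with
  | [x] => x
  | l' => .times l'

/-- Nested contexts `Γ{·}`: a nest with a hole inside one of its multisets
(or at the root). -/
inductive NCtx (α : Type) : Type where
  | hole
  | plus (l : List (Nest α)) (C : NCtx α)
  | times (l : List (Nest α)) (C : NCtx α)

/-- Filling the hole of a nested context (with the implicit merging and
promotion in the syntax tree). -/
def NCtx.fill : NCtx α → Nest α → Nest α
  | .hole, x => x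
  | .plus l C, x => nplus (C.fill x :: l)
  | .times l C, x => ntimes (C.fill x :: l)

mutual
/-- Equality of nests qua nested multisets: the lists in the two nests agree
up to permutation, recursively. -/
inductive NestEq : Nest α → Nest α → Prop where
  | frm (a : α) : NestEq (.frm a) (.frm a)
  | plus : NListPerm l l' → NestEq (.plus l) (.plus l')
  | times : NListPerm l l' → NestEq (.times l) (.times l')

inductive NListPerm : List (Nest α) → List (Nest α) → Prop where
  | nil : NListPerm [] []
  | cons : NestEq x y → NListPerm l l' → NListPerm (x :: l) (y :: l')
  | swap : NestEq x x' → NestEq y y' → NListPerm l l' →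
      NListPerm (x :: y :: l) (y' :: x' :: l')
  | trans : NListPerm l₁ l₂ → NListPerm l₂ l₃ → NListPerm l₁ l₃
end

/-- All leaves of a nest satisfy `p`. -/
inductive Nest.All (p : α → Prop) : Nest α → Prop where
  | frm : p a → Nest.All p (.frm a)
  | plus : (∀ x ∈ l, Nest.All p x) → Nest.All p (.plus l)
  | times : (∀ x ∈ l, Nest.All p x) → Nest.All p (.times l)

def Nest.notPlusRoot : Nest α → Prop
  | .plus _ => False
  | _ => True

def Nest.notTimesRoot : Nest α → Prop
  | .times _ => False
  | _ => True

/-- Well-formedness of a nest according to the two-sorted grammar: multisets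
are never singletons, and additive (resp. multiplicative) multisets contain
only formulas and multiplicative (resp. additive) nests. -/
inductive Nest.WF : Nest α → Prop where
  | frm (a : α) : Nest.WF (.frm a)
  | plus : l.length ≠ 1 → (∀ x ∈ l, Nest.WF x) → (∀ x ∈ l, Nest.notPlusRoot x) →
      Nest.WF (.plus l)
  | times : l.length ≠ 1 → (∀ x ∈ l, Nest.WF x) → (∀ x ∈ l, Nest.notTimesRoot x) →
      Nest.WF (.times l)

mutual
/-- Leafwise map of nests. -/
def Nest.map (f : α → β) : Nest α → Nest β
  | .frm a => .frm (f a)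
  | .plus l => .plus (Nest.mapList f l)
  | .times l => .times (Nest.mapList f l)

def Nest.mapList (f : α → β) : List (Nest α) → List (Nest β)
  | [] => []
  | x :: xs => Nest.map f x :: Nest.mapList f xs
end
/-- The nested sequent calculus ηLBI (system `ηLBI`, Figure 2): the rules of
LBI transcribed to two-sorted nests, with exchange absorbed by the multiset
structure (here: the explicit `exch` rule for the list representation of
multisets), weakening deleted, and the weakening-absorbing rules
`Ax'`, `I'`, `⊤'`, `∗'R`, `−∗'L` added (retaining `Ax`, `∗R`, `−∗L`, `IR`,
`⊤R`); there is no cut rule. -/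
inductive NProof : Nest Formula → Formula → Prop where
  | ax (φ) : NProof (.frm φ) φ
  | axP (a : ℕ) (l : List (Nest Formula)) :
      NProof (nplus (.frm (.atom a) :: l)) (.atom a)
  | exch : NProof Γ φ → NestEq Γ Γ' → NProof Γ' φ
  | contr (C : NCtx Formula) : NProof (C.fill (nplus [Γ', Γ'])) φ →
      NProof (C.fill Γ') φ
  | botL (C : NCtx Formula) (φ) : NProof (C.fill (.frm .bot)) φ
  | topR : NProof (.plus []) .top
  | topW (Γ : Nest Formula) : NProof Γ .top
  | unitR : NProof (.times []) .unit
  | unitW (l : List (Nest Formula)) : NProof (nplus (.times [] :: l)) .unit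
  | unitL (C : NCtx Formula) : NProof (C.fill (.times [])) φ →
      NProof (C.fill (.frm .unit)) φ
  | andL (C : NCtx Formula) : NProof (C.fill (nplus [.frm φ, .frm ψ])) χ →
      NProof (C.fill (.frm (.and φ ψ))) χ
  | andR : NProof Γ φ → NProof Δ ψ → NProof (nplus [Γ, Δ]) (.and φ ψ)
  | orL (C : NCtx Formula) : NProof (C.fill (.frm φ)) χ → NProof (C.fill (.frm ψ)) χ →
      NProof (C.fill (.frm (.or φ ψ))) χ
  | orR1 : NProof Γ φ → NProof Γ (.or φ ψ)
  | orR2 : NProof Γ ψ → NProof Γ (.or φ ψ)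
  | impL (C : NCtx Formula) : NProof Δ φ → NProof (C.fill (.frm ψ)) χ →
      NProof (C.fill (nplus [Δ, .frm (.imp φ ψ)])) χ
  | impR : NProof (nplus [Γ, .frm φ]) ψ → NProof Γ (.imp φ ψ)
  | starL (C : NCtx Formula) : NProof (C.fill (ntimes [.frm φ, .frm ψ])) χ →
      NProof (C.fill (.frm (.star φ ψ))) χ
  | starR : NProof Γ φ → NProof Δ ψ → NProof (ntimes [Γ, Δ]) (.star φ ψ)
  | starR' (l : List (Nest Formula)) : NProof Γ φ → NProof Δ ψ →
      NProof (nplus (ntimes [Γ, Δ] :: l)) (.star φ ψ)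
  | wandL (C : NCtx Formula) : NProof Δ φ → NProof (C.fill (.frm ψ)) χ →
      NProof (C.fill (ntimes [Δ, .frm (.wand φ ψ)])) χ
  | wandL' (C : NCtx Formula) : NProof Δ' φ →
      NProof (C.fill (ntimes [Δ'', .frm ψ])) χ →
      NProof (C.fill (ntimes [Δ', Δ'', nplus [Δ''', .frm (.wand φ ψ)]])) χ
  | wandR : NProof (ntimes [Γ, .frm φ]) ψ → NProof Γ (.wand φ ψ)
mutual
/-- Positive polarised formulas: `P,Q ::= ↓N | A⁺ | P∨Q | P∗Q | P∧⁺Q | ⊤⁺ | I | ⊥`. -/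
inductive PForm : Type where
  | atom (a : ℕ)        -- A⁺
  | shiftD (N : NForm)  -- ↓N
  | or (P Q : PForm)
  | star (P Q : PForm)
  | and (P Q : PForm)   -- ∧⁺
  | top                 -- ⊤⁺
  | unit                -- I
  | bot

/-- Negative polarised formulas: `N,M ::= ↑P | A⁻ | P→N | P−∗N | N∧⁻M | ⊤⁻`. -/
inductive NForm : Type where
  | atom (a : ℕ)        -- A⁻
  | shiftU (P : PForm)  -- ↑P
  | imp (P : PForm) (N : NForm)
  | wand (P : PForm) (N : NForm)
  | and (N M : NForm)   -- ∧⁻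
  | top                 -- ⊤⁻
end

mutual
/-- Depolarisation `⌊·⌋` of a positive formula: erase shifts and polarity
annotations. -/
def PForm.dep : PForm → Formula
  | .atom a => .atom a
  | .shiftD N => N.dep
  | .or P Q => .or P.dep Q.dep
  | .star P Q => .star P.dep Q.dep
  | .and P Q => .and P.dep Q.dep
  | .top => .top
  | .unit => .unit
  | .bot => .bot

/-- Depolarisation `⌊·⌋` of a negative formula. -/
def NForm.dep : NForm → Formula
  | .atom a => .atom a
  | .shiftU P => P.dep
  | .imp P N => .imp P.dep N.dep
  | .wand P N => .wand P.dep N.dep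
  | .and N M => .and N.dep M.dep
  | .top => .top
end

/-- Left-neutral formulas `L ::= ↓N | A⁺`. -/
def PForm.Neutral : PForm → Prop
  | .atom _ => True
  | .shiftD _ => True
  | _ => False

/-- Right-neutral formulas `R ::= ↑P | A⁻`. -/
def NForm.Neutral : NForm → Prop
  | .atom _ => True
  | .shiftU _ => True
  | _ => False

mutual
/-- Well-formedness of a positive formula w.r.t. a partition `pol` of the
propositional letters (`pol a = true` iff `A ∈ P⁺`). -/
def PForm.WFpol (pol : ℕ → Bool) : PForm → Prop
  | .atom a => pol a = true
  | .shiftD N => N.WFpol pol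
  | .or P Q => P.WFpol pol ∧ Q.WFpol pol
  | .star P Q => P.WFpol pol ∧ Q.WFpol pol
  | .and P Q => P.WFpol pol ∧ Q.WFpol pol
  | .top => True
  | .unit => True
  | .bot => True

/-- Well-formedness of a negative formula w.r.t. the partition `pol`. -/
def NForm.WFpol (pol : ℕ → Bool) : NForm → Prop
  | .atom a => pol a = false
  | .shiftU P => P.WFpol pol
  | .imp P N => P.WFpol pol ∧ N.WFpol pol
  | .wand P N => P.WFpol pol ∧ N.WFpol pol
  | .and N M => N.WFpol pol ∧ M.WFpol pol
  | .top => True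
end

/-- Leaves of polarised nests: either an (unfocused) positive formula, or a
negative formula under left focus `[N]`. -/
inductive Leaf : Type where
  | pos (P : PForm)
  | focN (N : NForm)

/-- Depolarisation of a leaf. -/
def Leaf.dep : Leaf → Formula
  | .pos P => P.dep
  | .focN N => N.dep

/-- A leaf is an ordinary (unfocused) positive formula. -/
def Leaf.IsPos : Leaf → Prop
  | .pos _ => True
  | .focN _ => False

/-- A leaf is a left-neutral positive formula (for neutral nests `Γ⃗`). -/
def Leaf.IsNeutral : Leaf → Prop
  | .pos P => P.Neutral
  | .focN _ => False

/-- Well-formedness of a leaf w.r.t. the partition `pol`. -/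
def Leaf.WFpol (pol : ℕ → Bool) : Leaf → Prop
  | .pos P => P.WFpol pol
  | .focN N => N.WFpol pol

/-- `Γ` is a positive (focus-free) nest. -/
def PosNest (Γ : Nest Leaf) : Prop := Γ.All Leaf.IsPos

/-- `Γ⃗` is a neutral nest. -/
def NeutralNest (Γ : Nest Leaf) : Prop := Γ.All Leaf.IsNeutral

/-- A positive formula as a (singleton) polarised nest. -/
def pf (P : PForm) : Nest Leaf := .frm (.pos P)

/-- A left-focused negative formula `[N]` as a (singleton) polarised nest. -/
def nf (N : NForm) : Nest Leaf := .frm (.focN N)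

/-- Polarised sequents: unfocused `Γ ⊢ N`, right-focused `Γ⃗ ⊢ [P]`, and
left-focused `Γ⃗{[N]} ⊢ R` (the focused formula is recorded as a `Leaf.focN`
leaf of the nest). -/
inductive FSeq : Type where
  | unf (Γ : Nest Leaf) (N : NForm)
  | rfoc (Γ : Nest Leaf) (P : PForm)
  | lfoc (Γ : Nest Leaf) (R : NForm)
/-- The focused system FBI (Figure 3) on polarised nested sequents, together
with an optional cut rule: `FBI b S` means the polarised sequent `S` is
derivable, where the flag `b` permits the `cut` rule (so `FBI false` is FBI
and `FBI true` is FBI+cut).  The rules are the polarised nested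
transcriptions of the ηLBI rules, the shift rules `↑R`, `↑L`, `↓R`, `↓L`,
contraction, exchange (the multiset structure of nests, made explicit for the
list representation), and the axioms `Ax⁺`, `Ax⁻`, `P : ↓↑P ⊢ [P]` and
`N : [N] ⊢ ↑↓N`. -/
inductive FBI : Bool → FSeq → Prop where
  -- axioms
  | axP (a : ℕ) (l : List (Nest Leaf)) (h : ∀ Λ ∈ l, NeutralNest Λ) :
      FBI b (.rfoc (nplus (pf (.atom a) :: l)) (.atom a))
  | axN (a : ℕ) : FBI b (.lfoc (nf (.atom a)) (.atom a))
  | ruleP (P : PForm) : FBI b (.rfoc (pf (.shiftD (.shiftU P))) P)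
  | ruleN (N : NForm) : FBI b (.lfoc (nf N) (.shiftU (.shiftD N)))
  -- unfocused right rules
  | topNR (Γ : Nest Leaf) : FBI b (.unf Γ .top)
  | andNR : FBI b (.unf Γ N) → FBI b (.unf Γ M) → FBI b (.unf Γ (.and N M))
  | impR : FBI b (.unf (nplus [Γ, pf P]) N) → FBI b (.unf Γ (.imp P N))
  | wandR : FBI b (.unf (ntimes [Γ, pf P]) N) → FBI b (.unf Γ (.wand P N))
  -- unfocused left rules
  | botL (C : NCtx Leaf) (N : NForm) : FBI b (.unf (C.fill (pf .bot)) N)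
  | unitL (C : NCtx Leaf) : FBI b (.unf (C.fill (.times [])) N) →
      FBI b (.unf (C.fill (pf .unit)) N)
  | topPL (C : NCtx Leaf) : FBI b (.unf (C.fill (.plus [])) N) →
      FBI b (.unf (C.fill (pf .top)) N)
  | andPL (C : NCtx Leaf) : FBI b (.unf (C.fill (nplus [pf P, pf Q])) N) →
      FBI b (.unf (C.fill (pf (.and P Q))) N)
  | orL (C : NCtx Leaf) : FBI b (.unf (C.fill (pf P)) N) →
      FBI b (.unf (C.fill (pf Q)) N) → FBI b (.unf (C.fill (pf (.or P Q))) N)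
  | starL (C : NCtx Leaf) : FBI b (.unf (C.fill (ntimes [pf P, pf Q])) N) →
      FBI b (.unf (C.fill (pf (.star P Q))) N)
  -- shift rules
  | upR : NeutralNest Γ → FBI b (.rfoc Γ P) → FBI b (.unf Γ (.shiftU P))
  | downR : FBI b (.unf Γ N) → FBI b (.rfoc Γ (.shiftD N))
  | downL (C : NCtx Leaf) : NForm.Neutral R → FBI b (.lfoc (C.fill (nf N)) R) →
      FBI b (.unf (C.fill (pf (.shiftD N))) R)
  | upL (C : NCtx Leaf) : FBI b (.unf (C.fill (pf P)) R) →
      FBI b (.lfoc (C.fill (nf (.shiftU P))) R)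
  -- right-focused rules
  | orR1 : FBI b (.rfoc Γ P) → FBI b (.rfoc Γ (.or P Q))
  | orR2 : FBI b (.rfoc Γ Q) → FBI b (.rfoc Γ (.or P Q))
  | starR (l : List (Nest Leaf)) : FBI b (.rfoc Γ P) → FBI b (.rfoc Δ Q) →
      FBI b (.rfoc (nplus (ntimes [Γ, Δ] :: l)) (.star P Q))
  | andPR : FBI b (.rfoc Γ P) → FBI b (.rfoc Δ Q) →
      FBI b (.rfoc (nplus [Γ, Δ]) (.and P Q))
  | topPR (Γ : Nest Leaf) : FBI b (.rfoc Γ .top)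
  | unitR (l : List (Nest Leaf)) : FBI b (.rfoc (nplus (.times [] :: l)) .unit)
  -- left-focused rules
  | andNL1 (C : NCtx Leaf) : FBI b (.lfoc (C.fill (nf N)) R) →
      FBI b (.lfoc (C.fill (nf (.and N M))) R)
  | andNL2 (C : NCtx Leaf) : FBI b (.lfoc (C.fill (nf M)) R) →
      FBI b (.lfoc (C.fill (nf (.and N M))) R)
  | impL (C : NCtx Leaf) : FBI b (.rfoc Δ P) → FBI b (.lfoc (C.fill (nf N)) R) →
      FBI b (.lfoc (C.fill (nplus [Δ, nf (.imp P N)])) R)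
  | wandL (C : NCtx Leaf) : FBI b (.rfoc Δ P) →
      FBI b (.lfoc (C.fill (ntimes [Δ', nf N])) R) →
      FBI b (.lfoc (C.fill (ntimes [Δ, Δ', nplus [Δ'', nf (.wand P N)]])) R)
  -- structural rules
  | contr (C : NCtx Leaf) : FBI b (.unf (C.fill (nplus [Γ', Γ'])) N) →
      FBI b (.unf (C.fill Γ') N)
  | exchU : FBI b (.unf Γ N) → NestEq Γ Γ' → FBI b (.unf Γ' N)
  | exchR : FBI b (.rfoc Γ P) → NestEq Γ Γ' → FBI b (.rfoc Γ' P)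
  | exchL : FBI b (.lfoc Γ R) → NestEq Γ Γ' → FBI b (.lfoc Γ' R)
  -- the cut rule (all well-formed instances; `φ⃗` is the cut formula possibly
  -- prefixed with one additional shift)
  | cutN (C : NCtx Leaf) : FBI true (.unf Δ N) →
      FBI true (.unf (C.fill (pf (.shiftD N))) M) → FBI true (.unf (C.fill Δ) M)
  | cutNL (C : NCtx Leaf) : FBI true (.unf Δ N) →
      FBI true (.lfoc (C.fill (pf (.shiftD N))) R) → FBI true (.lfoc (C.fill Δ) R)
  | cutP (C : NCtx Leaf) : FBI true (.rfoc Δ P) →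
      FBI true (.unf (C.fill (pf P)) M) → FBI true (.unf (C.fill Δ) M)
  | cutPR (C : NCtx Leaf) : FBI true (.rfoc Δ P) →
      FBI true (.rfoc (C.fill (pf P)) Q) → FBI true (.rfoc (C.fill Δ) Q)
  | cutPL (C : NCtx Leaf) : FBI true (.rfoc Δ P) →
      FBI true (.lfoc (C.fill (pf P)) R) → FBI true (.lfoc (C.fill Δ) R)

/-!
The canonical polarisation `φ.polarise pol` of a BI formula keeps the positive connectives, turns
`φ → ψ` into `↓(φᵖ → ↑ψᵖ)` (likewise `−∗`) and polarises atoms as `pol` says. An ηLBI proof of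
`Δ ⊢ φ` translates rule by rule into an FBI+cut proof of `Δᵖ ⊢ ↑φᵖ`: with cut, focusing costs
nothing, since `Γ ⊢ ↑P` gives `Γ ⊢ [P]` by a cut against `↓↑P ⊢ [P]`. By induction on formulas,
every well-formed `P` is interderivable with `⌊P⌋ᵖ`, and `↓N` with `⌊N⌋ᵖ`, because each connective
is a congruence for entailment and the shifts, conjunctions and tops of the two polarities are
interderivable. Cutting these equivalences into the translated proof at each leaf of `Γ` and at
`N` proves `Γ ⊢ N`.
-/

mutual
theorem NestEq.refl : ∀ x : Nest α, NestEq x x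
  | .frm a => .frm a
  | .plus l => .plus (NListPerm.refl l)
  | .times l => .times (NListPerm.refl l)

theorem NListPerm.refl : ∀ l : List (Nest α), NListPerm l l
  | [] => .nil
  | x :: xs => .cons (NestEq.refl x) (NListPerm.refl xs)
end

theorem NestEq.symm {x y : Nest α} (h : NestEq x y) : NestEq y x :=
  NestEq.rec (motive_1 := fun x y _ => NestEq y x) (motive_2 := fun l l' _ => NListPerm l' l)
    (fun a => .frm a) (fun _ ih => .plus ih) (fun _ ih => .times ih) .nil
    (fun _ _ ih ih' => .cons ih ih') (fun _ _ _ ihx ihy ih => .swap ihy ihx ih)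
    (fun _ _ ih ih' => .trans ih' ih) h

theorem NestEq.trans : ∀ {x y z : Nest α}, NestEq x y → NestEq y z → NestEq x z
  | _, _, _, .frm a, .frm _ => .frm a
  | _, _, _, .plus p, .plus q => .plus (p.trans q)
  | _, _, _, .times p, .times q => .times (p.trans q)

@[elab_as_elim]
theorem NListPerm.induction_on {motive : ∀ l l' : List (Nest α), NListPerm l l' → Prop}
    {l l' : List (Nest α)} (h : NListPerm l l') (nil : motive [] [] .nil)
    (cons : ∀ {x y l l'} (e : NestEq x y) (p : NListPerm l l'), motive l l' p →
      motive (x :: l) (y :: l') (.cons e p))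
    (swap : ∀ {x x' y y' l l'} (e : NestEq x x') (e' : NestEq y y') (p : NListPerm l l'),
      motive l l' p → motive (x :: y :: l) (y' :: x' :: l') (.swap e e' p))
    (trans : ∀ {l₁ l₂ l₃} (p : NListPerm l₁ l₂) (q : NListPerm l₂ l₃), motive l₁ l₂ p →
      motive l₂ l₃ q → motive l₁ l₃ (.trans p q)) : motive l l' h :=
  NListPerm.rec (motive_1 := fun _ _ _ => True) (motive_2 := motive)
    (fun _ => trivial) (fun _ _ => trivial) (fun _ _ => trivial) nil
    (fun e p _ ih => cons e p ih) (fun e e' p _ _ ih => swap e e' p ih)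
    (fun p q ih ih' => trans p q ih ih') h

theorem NListPerm.of_perm {l l' : List (Nest α)} (h : l.Perm l') : NListPerm l l' := by
  induction h with
  | nil => exact .nil
  | cons x _ ih => exact .cons (.refl x) ih
  | swap x y l => exact .swap (.refl y) (.refl x) (.refl l)
  | trans _ _ ih ih' => exact .trans ih ih'

theorem NListPerm.length_eq {l l' : List (Nest α)} (h : NListPerm l l') :
    l.length = l'.length :=
  h.induction_on (motive := fun l l' _ => l.length = l'.length) rfl
    (fun _ _ ih => by simp [ih]) (fun _ _ _ ih => by simp [ih]) (fun _ _ ih ih' => ih.trans ih')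

theorem NListPerm.append {l₁ l₁' l₂ l₂' : List (Nest α)} (h₁ : NListPerm l₁ l₁')
    (h₂ : NListPerm l₂ l₂') : NListPerm (l₁ ++ l₂) (l₁' ++ l₂') := by
  induction h₁ using NListPerm.induction_on generalizing l₂ l₂' with
  | nil => exact h₂
  | cons e _ ih => exact .cons e (ih h₂)
  | swap e e' _ ih => exact .swap e e' (ih h₂)
  | trans _ _ ih ih' => exact .trans (ih (.refl l₂)) (ih' h₂)

theorem NListPerm.exists_of_eq_singleton {l l' : List (Nest α)} (h : NListPerm l l') :
    ∀ x, l = [x] → ∃ y, l' = [y] ∧ NestEq x y := by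
  induction h using NListPerm.induction_on with
  | nil => simp
  | cons e p _ =>
    rintro _ ⟨⟩
    obtain ⟨⟩ : _ = [] := List.length_eq_zero_iff.mp p.length_eq.symm
    exact ⟨_, rfl, e⟩
  | swap => simp
  | trans _ _ ih ih' =>
    rintro x rfl
    obtain ⟨y, rfl, e⟩ := ih x rfl
    obtain ⟨z, rfl, e'⟩ := ih' y rfl
    exact ⟨z, rfl, e.trans e'⟩

def Nest.collapse (node : List (Nest α) → Nest α) : List (Nest α) → Nest α
  | [x] => x
  | l => node l

theorem nplus_eq_collapse (l : List (Nest α)) :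
    nplus l = Nest.collapse .plus (l.flatMap Nest.flatP) := by
  unfold nplus Nest.collapse
  rcases l.flatMap Nest.flatP with _ | ⟨x, _ | ⟨y, t⟩⟩ <;> rfl

theorem ntimes_eq_collapse (l : List (Nest α)) :
    ntimes l = Nest.collapse .times (l.flatMap Nest.flatT) := by
  unfold ntimes Nest.collapse
  rcases l.flatMap Nest.flatT with _ | ⟨x, _ | ⟨y, t⟩⟩ <;> rfl

theorem Nest.collapse_of_length_ne_one (node : List (Nest α) → Nest α) {l : List (Nest α)}
    (hl : l.length ≠ 1) : Nest.collapse node l = node l := by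
  match l, hl with
  | [], _ => rfl
  | _ :: _ :: _, _ => rfl

theorem NListPerm.collapse {node : List (Nest α) → Nest α}
    (hnode : ∀ {k k'}, NListPerm k k' → NestEq (node k) (node k')) {l l' : List (Nest α)}
    (h : NListPerm l l') : NestEq (Nest.collapse node l) (Nest.collapse node l') := by
  by_cases hl : l.length = 1
  · obtain ⟨x, rfl⟩ := List.length_eq_one_iff.mp hl
    obtain ⟨y, rfl, e⟩ := h.exists_of_eq_singleton x rfl
    exact e
  · have hl' : l'.length ≠ 1 := h.length_eq ▸ hl
    rw [Nest.collapse_of_length_ne_one node hl, Nest.collapse_of_length_ne_one node hl']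
    exact hnode h

theorem NListPerm.flatMap {f : Nest α → List (Nest α)}
    (hf : ∀ {x y}, NestEq x y → NListPerm (f x) (f y)) {l l' : List (Nest α)}
    (h : NListPerm l l') : NListPerm (l.flatMap f) (l'.flatMap f) := by
  induction h using NListPerm.induction_on with
  | nil => exact .nil
  | cons e _ ih => exact (hf e).append ih
  | swap e e' _ ih =>
    refine .trans (.of_perm ?_) ((hf e').append ((hf e).append ih))
    simpa only [List.flatMap_cons] using List.perm_append_comm_assoc _ _ _
  | trans _ _ ih ih' => exact ih.trans ih'

theorem NestEq.flatP : ∀ {x y : Nest α}, NestEq x y → NListPerm x.flatP y.flatP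
  | _, _, .frm a => .cons (.frm a) .nil
  | _, _, .plus p => p
  | _, _, .times p => .cons (.times p) .nil

theorem NestEq.flatT : ∀ {x y : Nest α}, NestEq x y → NListPerm x.flatT y.flatT
  | _, _, .frm a => .cons (.frm a) .nil
  | _, _, .plus p => .cons (.plus p) .nil
  | _, _, .times p => p

theorem nplus_congr {l l' : List (Nest α)} (h : NListPerm l l') :
    NestEq (nplus l) (nplus l') := by
  rw [nplus_eq_collapse, nplus_eq_collapse]
  exact (h.flatMap NestEq.flatP).collapse NestEq.plus

theorem ntimes_congr {l l' : List (Nest α)} (h : NListPerm l l') :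
    NestEq (ntimes l) (ntimes l') := by
  rw [ntimes_eq_collapse, ntimes_eq_collapse]
  exact (h.flatMap NestEq.flatT).collapse NestEq.times

theorem nplus_comm (x y : Nest α) : NestEq (nplus [x, y]) (nplus [y, x]) :=
  nplus_congr (.of_perm (.swap y x []))

theorem ntimes_comm (x y : Nest α) : NestEq (ntimes [x, y]) (ntimes [y, x]) :=
  ntimes_congr (.of_perm (.swap y x []))

theorem Nest.WF.nplus_eq {l : List (Nest α)} (h : (Nest.plus l).WF) : nplus l = .plus l := by
  obtain _ | ⟨hl, -, hroot⟩ := h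
  have : l.flatMap Nest.flatP = l := by
    conv_rhs => rw [← List.flatMap_singleton' l]
    refine List.flatMap_congr fun x hx => ?_
    have := hroot x hx
    cases x <;> simp_all [Nest.flatP, Nest.notPlusRoot]
  rw [nplus_eq_collapse, this, Nest.collapse_of_length_ne_one _ hl]

theorem Nest.WF.ntimes_eq {l : List (Nest α)} (h : (Nest.times l).WF) :
    ntimes l = .times l := by
  obtain _ | _ | ⟨hl, -, hroot⟩ := h
  have : l.flatMap Nest.flatT = l := by
    conv_rhs => rw [← List.flatMap_singleton' l]
    refine List.flatMap_congr fun x hx => ?_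
    have := hroot x hx
    cases x <;> simp_all [Nest.flatT, Nest.notTimesRoot]
  rw [ntimes_eq_collapse, this, Nest.collapse_of_length_ne_one _ hl]

def NCtx.comp : NCtx α → NCtx α → NCtx α
  | .hole, D => D
  | .plus l C, D => .plus l (C.comp D)
  | .times l C, D => .times l (C.comp D)

theorem NCtx.fill_comp (C D : NCtx α) (x : Nest α) : (C.comp D).fill x = C.fill (D.fill x) := by
  induction C with
  | hole => rfl
  | plus l C ih => simp only [NCtx.comp, NCtx.fill, ih]
  | times l C ih => simp only [NCtx.comp, NCtx.fill, ih]

theorem NCtx.fill_congr (C : NCtx α) {x y : Nest α} (e : NestEq x y) :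
    NestEq (C.fill x) (C.fill y) := by
  induction C with
  | hole => exact e
  | plus l C ih => exact nplus_congr (.cons ih (.refl l))
  | times l C ih => exact ntimes_congr (.cons ih (.refl l))

theorem NCtx.nestEq_fill_comp_plus (C : NCtx α) (Δ y : Nest α) :
    NestEq ((C.comp (.plus [Δ] .hole)).fill y) (C.fill (nplus [Δ, y])) := by
  rw [NCtx.fill_comp]
  exact C.fill_congr (nplus_comm y Δ)

theorem NCtx.nestEq_fill_comp_times (C : NCtx α) (Δ y : Nest α) :
    NestEq ((C.comp (.times [Δ] .hole)).fill y) (C.fill (ntimes [Δ, y])) := by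
  rw [NCtx.fill_comp]
  exact C.fill_congr (ntimes_comm y Δ)

def NCtx.map (f : α → β) : NCtx α → NCtx β
  | .hole => .hole
  | .plus l C => .plus (l.map (Nest.map f)) (C.map f)
  | .times l C => .times (l.map (Nest.map f)) (C.map f)

@[elab_as_elim]
theorem Nest.induction {motive : Nest α → Prop} (frm : ∀ a, motive (.frm a))
    (plus : ∀ l, (∀ x ∈ l, motive x) → motive (.plus l))
    (times : ∀ l, (∀ x ∈ l, motive x) → motive (.times l)) (x : Nest α) : motive x :=
  Nest.rec (motive_1 := motive) (motive_2 := fun l => ∀ x ∈ l, motive x) frm plus times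
    (by simp) (fun _ _ hx hl => List.forall_mem_cons.mpr ⟨hx, hl⟩) x

@[simp]
theorem Nest.mapList_eq_map (f : α → β) (l : List (Nest α)) :
    Nest.mapList f l = l.map (Nest.map f) := by
  induction l with
  | nil => rfl
  | cons x l ih => simp only [Nest.mapList, ih, List.map_cons]

theorem Nest.map_map {γ : Type} (f : α → β) (g : β → γ) (x : Nest α) :
    (x.map f).map g = x.map fun a => g (f a) := by
  induction x using Nest.induction with
  | frm a => rfl
  | plus l ih => simpa [Nest.map] using List.map_congr_left ih
  | times l ih => simpa [Nest.map] using List.map_congr_left ih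

theorem NestEq.map (f : α → β) {x y : Nest α} (h : NestEq x y) :
    NestEq (x.map f) (y.map f) :=
  NestEq.rec (motive_1 := fun x y _ => NestEq (x.map f) (y.map f))
    (motive_2 := fun l l' _ => NListPerm (l.map (Nest.map f)) (l'.map (Nest.map f)))
    (fun a => .frm (f a))
    (fun _ ih => by simpa only [Nest.map, Nest.mapList_eq_map] using NestEq.plus ih)
    (fun _ ih => by simpa only [Nest.map, Nest.mapList_eq_map] using NestEq.times ih)
    .nil (fun _ _ ih ih' => .cons ih ih') (fun _ _ _ ihx ihy ih => .swap ihx ihy ih)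
    (fun _ _ ih ih' => .trans ih ih') h

theorem Nest.map_collapse (f : α → β) {node : List (Nest α) → Nest α}
    {node' : List (Nest β) → Nest β} (hnode : ∀ l, (node l).map f = node' (l.map (Nest.map f)))
    (l : List (Nest α)) :
    (Nest.collapse node l).map f = Nest.collapse node' (l.map (Nest.map f)) := by
  match l with
  | [_] => rfl
  | [] => exact hnode []
  | _ :: _ :: _ => exact hnode _

theorem Nest.map_nplus (f : α → β) (l : List (Nest α)) :
    (nplus l).map f = nplus (l.map (Nest.map f)) := by
  have hflat (x : Nest α) : (x.map f).flatP = x.flatP.map (Nest.map f) := by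
    cases x <;> simp [Nest.map, Nest.flatP]
  rw [nplus_eq_collapse, nplus_eq_collapse,
    Nest.map_collapse f (node' := .plus) (fun _ => by simp [Nest.map]),
    List.map_flatMap, List.flatMap_map]
  simp only [hflat]

theorem Nest.map_ntimes (f : α → β) (l : List (Nest α)) :
    (ntimes l).map f = ntimes (l.map (Nest.map f)) := by
  have hflat (x : Nest α) : (x.map f).flatT = x.flatT.map (Nest.map f) := by
    cases x <;> simp [Nest.map, Nest.flatT]
  rw [ntimes_eq_collapse, ntimes_eq_collapse,
    Nest.map_collapse f (node' := .times) (fun _ => by simp [Nest.map]),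
    List.map_flatMap, List.flatMap_map]
  simp only [hflat]

theorem Nest.map_fill (f : α → β) (C : NCtx α) (x : Nest α) :
    (C.fill x).map f = (C.map f).fill (x.map f) := by
  induction C with
  | hole => rfl
  | plus l C ih => simp [NCtx.fill, NCtx.map, Nest.map_nplus, ih]
  | times l C ih => simp [NCtx.fill, NCtx.map, Nest.map_ntimes, ih]

section DerivedRules

def Replaces (Δ Δ' : Nest Leaf) : Prop :=
  ∀ (C : NCtx Leaf) (N : NForm), FBI true (.unf (C.fill Δ') N) → FBI true (.unf (C.fill Δ) N)

namespace Replaces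

variable {Δ Δ' Δ'' : Nest Leaf}

theorem refl (Δ : Nest Leaf) : Replaces Δ Δ := fun _ _ h => h

theorem trans (h : Replaces Δ Δ') (h' : Replaces Δ' Δ'') : Replaces Δ Δ'' :=
  fun C N d => h C N (h' C N d)

theorem of_nestEq (e : NestEq Δ Δ') : Replaces Δ Δ' :=
  fun C _ h => .exchU h (C.fill_congr e.symm)

theorem fill (D : NCtx Leaf) (h : Replaces Δ Δ') : Replaces (D.fill Δ) (D.fill Δ') :=
  fun C N d => by
    have := h (C.comp D) N (by rwa [NCtx.fill_comp])
    rwa [NCtx.fill_comp] at this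

theorem of_rfoc {P : PForm} (h : FBI true (.rfoc Δ P)) : Replaces Δ (pf P) :=
  fun C _ d => .cutP C h d

theorem node_of_forall₂ {node : List (Nest Leaf) → Nest Leaf} (ctx : List (Nest Leaf) → NCtx Leaf)
    (hctx : ∀ l x, (ctx l).fill x = node (x :: l))
    (hperm : ∀ {l l'}, l.Perm l' → NestEq (node l) (node l')) {l l' : List (Nest Leaf)}
    (h : List.Forall₂ Replaces l l') : Replaces (node l) (node l') := by
  suffices ∀ k, Replaces (node (l ++ k)) (node (l' ++ k)) by simpa using this []
  -- each entry is rotated to the front, where `ctx` reaches it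
  induction h with
  | nil => exact fun k => refl _
  | @cons x x' l l' hx _ ih =>
    intro k
    have head : Replaces (node (x :: (l ++ k))) (node (x' :: (l ++ k))) := by
      simpa only [hctx] using hx.fill (ctx (l ++ k))
    exact head.trans <| (of_nestEq (hperm List.perm_middle.symm)).trans <|
      (ih (x' :: k)).trans (of_nestEq (hperm List.perm_middle))

theorem nplus_of_forall₂ {l l' : List (Nest Leaf)} (h : List.Forall₂ Replaces l l') :
    Replaces (nplus l) (nplus l') :=
  node_of_forall₂ (.plus · .hole) (fun _ _ => rfl) (fun p => nplus_congr (.of_perm p)) h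

theorem ntimes_of_forall₂ {l l' : List (Nest Leaf)} (h : List.Forall₂ Replaces l l') :
    Replaces (ntimes l) (ntimes l') :=
  node_of_forall₂ (.times · .hole) (fun _ _ => rfl) (fun p => ntimes_congr (.of_perm p)) h

theorem nplus_cons (Δ : Nest Leaf) (l : List (Nest Leaf)) : Replaces (nplus (Δ :: l)) (nplus l) :=
  fun C N h => by
    have h' : FBI true (.unf ((C.comp (.plus l .hole)).fill (.plus [])) N) := by
      rwa [NCtx.fill_comp]
    have := FBI.cutP _ (.topPR Δ) (FBI.topPL _ h')
    rwa [NCtx.fill_comp] at this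

theorem nplus_append_left (l k : List (Nest Leaf)) : Replaces (nplus (l ++ k)) (nplus k) := by
  induction l with
  | nil => exact refl _
  | cons x l ih => exact (nplus_cons x _).trans ih

theorem nplus_append_right (l k : List (Nest Leaf)) : Replaces (nplus (l ++ k)) (nplus l) :=
  (of_nestEq (nplus_congr (.of_perm List.perm_append_comm))).trans (nplus_append_left k l)

end Replaces

theorem FBI.rfoc_of_unf {Γ : Nest Leaf} {P : PForm} (h : FBI true (.unf Γ (.shiftU P))) :
    FBI true (.rfoc Γ P) :=
  .cutPR .hole (.downR h) (.ruleP P)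

theorem NeutralNest.plus_pair {L L' : PForm} (h : L.Neutral) (h' : L'.Neutral) :
    NeutralNest (.plus [pf L, pf L']) :=
  .plus fun _ hx => by rcases List.mem_pair.mp hx with rfl | rfl <;> exact .frm ‹_›

theorem NeutralNest.times_pair {L L' : PForm} (h : L.Neutral) (h' : L'.Neutral) :
    NeutralNest (.times [pf L, pf L']) :=
  .times fun _ hx => by rcases List.mem_pair.mp hx with rfl | rfl <;> exact .frm ‹_›

/- The focused rule is applied to the neutral `↓↑P`, which is then cut against `Γ`; identity
expansion is not needed, so these rules serve to prove it. -/
section UnfocusedRightRules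

variable {Γ Δ : Nest Leaf} {P Q : PForm}

theorem FBI.unf_orR1 (h : FBI true (.unf Γ (.shiftU P))) :
    FBI true (.unf Γ (.shiftU (.or P Q))) :=
  Replaces.of_rfoc (.downR h) .hole _ (.upR (.frm trivial) (.orR1 (.ruleP P)))

theorem FBI.unf_orR2 (h : FBI true (.unf Γ (.shiftU Q))) :
    FBI true (.unf Γ (.shiftU (.or P Q))) :=
  Replaces.of_rfoc (.downR h) .hole _ (.upR (.frm trivial) (.orR2 (.ruleP Q)))

theorem FBI.unf_andPR (h : FBI true (.unf Γ (.shiftU P))) (h' : FBI true (.unf Δ (.shiftU Q))) :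
    FBI true (.unf (nplus [Γ, Δ]) (.shiftU (.and P Q))) :=
  Replaces.nplus_of_forall₂ (.cons (.of_rfoc (.downR h)) (.cons (.of_rfoc (.downR h')) .nil))
    .hole _ (.upR (.plus_pair trivial trivial) (.andPR (.ruleP P) (.ruleP Q)))

theorem FBI.unf_starR (h : FBI true (.unf Γ (.shiftU P))) (h' : FBI true (.unf Δ (.shiftU Q))) :
    FBI true (.unf (ntimes [Γ, Δ]) (.shiftU (.star P Q))) :=
  Replaces.ntimes_of_forall₂ (.cons (.of_rfoc (.downR h)) (.cons (.of_rfoc (.downR h')) .nil))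
    .hole _ (.upR (.times_pair trivial trivial) (.starR [] (.ruleP P) (.ruleP Q)))

end UnfocusedRightRules

section LeftRules

variable {b : Bool} {X : Nest Leaf → Nest Leaf} {N R : NForm} {P : PForm}

theorem FBI.downL_of_nestEq (D : NCtx Leaf) (hD : ∀ y, NestEq (D.fill y) (X y))
    (hR : R.Neutral) (h : FBI b (.lfoc (X (nf N)) R)) : FBI b (.unf (X (pf (.shiftD N))) R) :=
  .exchU (.downL D hR (.exchL h (hD _).symm)) (hD _)

theorem FBI.upL_of_nestEq (D : NCtx Leaf) (hD : ∀ y, NestEq (D.fill y) (X y))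
    (h : FBI b (.unf (X (pf P)) R)) : FBI b (.lfoc (X (nf (.shiftU P))) R) :=
  .exchL (.upL D (.exchU h (hD _).symm)) (hD _)

theorem FBI.downL_plus (C : NCtx Leaf) {Δ : Nest Leaf} (hR : R.Neutral)
    (h : FBI b (.lfoc (C.fill (nplus [Δ, nf N])) R)) :
    FBI b (.unf (C.fill (nplus [Δ, pf (.shiftD N)])) R) :=
  .downL_of_nestEq (X := fun y => C.fill (nplus [Δ, y])) _ (C.nestEq_fill_comp_plus Δ) hR h

theorem FBI.downL_times (C : NCtx Leaf) {Δ : Nest Leaf} (hR : R.Neutral)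
    (h : FBI b (.lfoc (C.fill (ntimes [Δ, nf N])) R)) :
    FBI b (.unf (C.fill (ntimes [Δ, pf (.shiftD N)])) R) :=
  .downL_of_nestEq (X := fun y => C.fill (ntimes [Δ, y])) _ (C.nestEq_fill_comp_times Δ) hR h

-- `−∗L` with `Δ' = ⟨⟩×` and `Δ'' = ⟨⟩+`, which the smart constructors erase
theorem FBI.wandL₀ (C : NCtx Leaf) {Δ : Nest Leaf} (h : FBI b (.rfoc Δ P))
    (h' : FBI b (.lfoc (C.fill (nf N)) R)) :
    FBI b (.lfoc (C.fill (ntimes [Δ, nf (.wand P N)])) R) :=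
  FBI.wandL (Δ' := .times []) (Δ'' := .plus []) C h h'

end LeftRules

end DerivedRules

section Entailment

def PForm.Entails (P Q : PForm) : Prop := FBI true (.unf (pf P) (.shiftU Q))

def NForm.Entails (N M : NForm) : Prop := FBI true (.unf (pf (.shiftD N)) M)

variable {Γ : Nest Leaf} {P P' Q Q' : PForm} {N N' M M' : NForm}

theorem FBI.cut_shiftD (hN : N.Entails M) (h : FBI true (.unf Γ (.shiftU (.shiftD N)))) :
    FBI true (.unf Γ M) :=
  .cutP .hole (.rfoc_of_unf h) hN

theorem PForm.Entails.or (h : P.Entails P') (h' : Q.Entails Q') :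
    (P.or Q).Entails (P'.or Q') :=
  .orL .hole (.unf_orR1 h) (.unf_orR2 h')

theorem PForm.Entails.and (h : P.Entails P') (h' : Q.Entails Q') :
    (P.and Q).Entails (P'.and Q') :=
  .andPL .hole (.unf_andPR h h')

theorem PForm.Entails.star (h : P.Entails P') (h' : Q.Entails Q') :
    (P.star Q).Entails (P'.star Q') :=
  .starL .hole (.unf_starR h h')

theorem PForm.Entails.shiftD (h : N.Entails M) : (PForm.shiftD N).Entails (.shiftD M) :=
  .upR (.frm trivial) (.downR h)

theorem NForm.Entails.shiftU (h : P.Entails Q) : (NForm.shiftU P).Entails (.shiftU Q) :=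
  .downL .hole trivial (.upL .hole h)

theorem NForm.Entails.and_left (h : N.Entails N') : (N.and M).Entails N' :=
  .cut_shiftD h (.downL .hole trivial (.andNL1 .hole (.ruleN N)))

theorem NForm.Entails.and_right (h : M.Entails M') : (N.and M).Entails M' :=
  .cut_shiftD h (.downL .hole trivial (.andNL2 .hole (.ruleN M)))

theorem NForm.Entails.and (h : N.Entails N') (h' : M.Entails M') :
    (N.and M).Entails (N'.and M') :=
  .andNR h.and_left h'.and_right

theorem NForm.Entails.imp (hP : P'.Entails P) (hN : N.Entails N') :
    (NForm.imp P N).Entails (.imp P' N') := by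
  refine .impR (.exchU (Γ := nplus [pf P', pf (.shiftD (.imp P N))]) ?_ (nplus_comm _ _))
  refine .cut_shiftD hN (Replaces.nplus_of_forall₂ (.cons (.of_rfoc (.downR hP))
    (.cons (.refl _) .nil)) .hole _ ?_)
  -- `→L` on the axioms `↓↑P ⊢ [P]` and `[N] ⊢ ↑↓N`
  exact .downL_plus .hole trivial (.impL .hole (.ruleP P) (.ruleN N))

theorem NForm.Entails.wand (hP : P'.Entails P) (hN : N.Entails N') :
    (NForm.wand P N).Entails (.wand P' N') := by
  refine .wandR (.exchU (Γ := ntimes [pf P', pf (.shiftD (.wand P N))]) ?_ (ntimes_comm _ _))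
  refine .cut_shiftD hN (Replaces.ntimes_of_forall₂ (.cons (.of_rfoc (.downR hP))
    (.cons (.refl _) .nil)) .hole _ ?_)
  exact .downL_times .hole trivial (.wandL₀ .hole (.ruleP P) (.ruleN N))

mutual
theorem PForm.Entails.refl : ∀ P : PForm, P.Entails P
  | .atom a => .upR (.frm trivial) (.axP a [] (by simp))
  | .shiftD N => .shiftD (NForm.Entails.refl N)
  | .or P Q => .or (PForm.Entails.refl P) (PForm.Entails.refl Q)
  | .star P Q => .star (PForm.Entails.refl P) (PForm.Entails.refl Q)
  | .and P Q => .and (PForm.Entails.refl P) (PForm.Entails.refl Q)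
  | .top => .topPL .hole (.upR (.plus (by simp)) (.topPR _))
  | .unit => .unitL .hole (.upR (.times (by simp)) (.unitR []))
  | .bot => .botL .hole _

theorem NForm.Entails.refl : ∀ N : NForm, N.Entails N
  | .atom a => .downL .hole trivial (.axN a)
  | .shiftU P => .shiftU (PForm.Entails.refl P)
  | .imp P N => .imp (PForm.Entails.refl P) (NForm.Entails.refl N)
  | .wand P N => .wand (PForm.Entails.refl P) (NForm.Entails.refl N)
  | .and N M => .and (NForm.Entails.refl N) (NForm.Entails.refl M)
  | .top => .topNR _
end

theorem FBI.unf_of_rfoc (h : FBI true (.rfoc Γ P)) : FBI true (.unf Γ (.shiftU P)) :=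
  .cutP .hole h (PForm.Entails.refl P)

theorem FBI.unf_of_unf_shiftU_shiftD (h : FBI true (.unf Γ (.shiftU (.shiftD N)))) :
    FBI true (.unf Γ N) :=
  .cut_shiftD (NForm.Entails.refl N) h

theorem FBI.unf_shiftU_of_entails (h : FBI true (.unf Γ (.shiftU P))) (hPQ : P.Entails Q) :
    FBI true (.unf Γ (.shiftU Q)) :=
  .cutP .hole (.rfoc_of_unf h) hPQ

theorem PForm.Entails.trans {R : PForm} (h : P.Entails Q) (h' : Q.Entails R) : P.Entails R :=
  FBI.unf_shiftU_of_entails h h'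

theorem NForm.Entails.shiftU_of_entails_shiftD (h : Q.Entails (.shiftD N)) :
    (NForm.shiftU Q).Entails N :=
  .cutP .hole (.ruleP Q) (.unf_of_unf_shiftU_shiftD h)

theorem PForm.entails_shiftD_shiftU (P : PForm) : P.Entails (.shiftD (.shiftU P)) :=
  .unf_of_rfoc (.downR (PForm.Entails.refl P))

theorem PForm.shiftD_shiftU_entails (P : PForm) : (PForm.shiftD (.shiftU P)).Entails P :=
  .upR (.frm trivial) (.ruleP P)

theorem PForm.shiftD_andN_entails :
    (PForm.shiftD (N.and M)).Entails (.and (.shiftD N) (.shiftD M)) :=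
  .contr .hole (.upR (.plus_pair trivial trivial)
    (.andPR (.downR (NForm.Entails.refl N).and_left) (.downR (NForm.Entails.refl M).and_right)))

theorem PForm.andP_shiftD_entails :
    (PForm.and (.shiftD N) (.shiftD M)).Entails (.shiftD (N.and M)) := by
  refine .andPL .hole (.upR (.plus_pair trivial trivial) (.downR (.andNR ?_ ?_)))
  · exact Replaces.nplus_append_right [_] [_] .hole _ (NForm.Entails.refl N)
  · exact Replaces.nplus_append_left [_] [_] .hole _ (NForm.Entails.refl M)

theorem PForm.shiftD_topN_entails : (PForm.shiftD .top).Entails .top :=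
  .upR (.frm trivial) (.topPR _)

theorem PForm.topP_entails_shiftD : PForm.top.Entails (.shiftD .top) :=
  .topPL .hole (.upR (.plus (by simp)) (.downR (.topNR _)))

end Entailment

def Formula.polarise (pol : ℕ → Bool) : Formula → PForm
  | .atom a => if pol a then .atom a else .shiftD (.atom a)
  | .top => .top
  | .bot => .bot
  | .unit => .unit
  | .and φ ψ => .and (φ.polarise pol) (ψ.polarise pol)
  | .or φ ψ => .or (φ.polarise pol) (ψ.polarise pol)
  | .star φ ψ => .star (φ.polarise pol) (ψ.polarise pol)
  | .imp φ ψ => .shiftD (.imp (φ.polarise pol) (.shiftU (ψ.polarise pol)))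
  | .wand φ ψ => .shiftD (.wand (φ.polarise pol) (.shiftU (ψ.polarise pol)))

mutual
theorem PForm.polarise_dep_interderivable (pol : ℕ → Bool) : ∀ P : PForm, P.WFpol pol →
    P.Entails (P.dep.polarise pol) ∧ (P.dep.polarise pol).Entails P
  | .atom a, h => by
    simp only [PForm.dep, Formula.polarise, show pol a = true from h, if_true]
    exact ⟨.refl _, .refl _⟩
  | .shiftD N, h => NForm.polarise_dep_interderivable pol N h
  | .or P Q, ⟨hP, hQ⟩ =>
    have ⟨hP₁, hP₂⟩ := PForm.polarise_dep_interderivable pol P hP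
    have ⟨hQ₁, hQ₂⟩ := PForm.polarise_dep_interderivable pol Q hQ
    ⟨hP₁.or hQ₁, hP₂.or hQ₂⟩
  | .star P Q, ⟨hP, hQ⟩ =>
    have ⟨hP₁, hP₂⟩ := PForm.polarise_dep_interderivable pol P hP
    have ⟨hQ₁, hQ₂⟩ := PForm.polarise_dep_interderivable pol Q hQ
    ⟨hP₁.star hQ₁, hP₂.star hQ₂⟩
  | .and P Q, ⟨hP, hQ⟩ =>
    have ⟨hP₁, hP₂⟩ := PForm.polarise_dep_interderivable pol P hP
    have ⟨hQ₁, hQ₂⟩ := PForm.polarise_dep_interderivable pol Q hQ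
    ⟨hP₁.and hQ₁, hP₂.and hQ₂⟩
  | .top, _ => ⟨.refl _, .refl _⟩
  | .unit, _ => ⟨.refl _, .refl _⟩
  | .bot, _ => ⟨.refl _, .refl _⟩

theorem NForm.polarise_dep_interderivable (pol : ℕ → Bool) : ∀ N : NForm, N.WFpol pol →
    (PForm.shiftD N).Entails (N.dep.polarise pol) ∧ (N.dep.polarise pol).Entails (.shiftD N)
  | .atom a, h => by
    simp only [NForm.dep, Formula.polarise, show pol a = false from h]
    exact ⟨.refl _, .refl _⟩
  | .shiftU P, h =>
    have ⟨hP₁, hP₂⟩ := PForm.polarise_dep_interderivable pol P h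
    ⟨(PForm.shiftD_shiftU_entails P).trans hP₁, hP₂.trans (PForm.entails_shiftD_shiftU P)⟩
  | .imp P N, ⟨hP, hN⟩ =>
    have ⟨hP₁, hP₂⟩ := PForm.polarise_dep_interderivable pol P hP
    have ⟨hN₁, hN₂⟩ := NForm.polarise_dep_interderivable pol N hN
    ⟨.shiftD (.imp hP₂ hN₁), .shiftD (.imp hP₁ (.shiftU_of_entails_shiftD hN₂))⟩
  | .wand P N, ⟨hP, hN⟩ =>
    have ⟨hP₁, hP₂⟩ := PForm.polarise_dep_interderivable pol P hP
    have ⟨hN₁, hN₂⟩ := NForm.polarise_dep_interderivable pol N hN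
    ⟨.shiftD (.wand hP₂ hN₁), .shiftD (.wand hP₁ (.shiftU_of_entails_shiftD hN₂))⟩
  | .and N M, ⟨hN, hM⟩ =>
    have ⟨hN₁, hN₂⟩ := NForm.polarise_dep_interderivable pol N hN
    have ⟨hM₁, hM₂⟩ := NForm.polarise_dep_interderivable pol M hM
    ⟨PForm.shiftD_andN_entails.trans (hN₁.and hM₁), (hN₂.and hM₂).trans PForm.andP_shiftD_entails⟩
  | .top, _ => ⟨PForm.shiftD_topN_entails, PForm.topP_entails_shiftD⟩
end

section Simulation

variable {Δ Δ' Δ'' : Nest Leaf} {P Q : PForm} {R : NForm}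

theorem FBI.unf_impL (C : NCtx Leaf) (hR : R.Neutral) (h : FBI true (.unf Δ (.shiftU P)))
    (h' : FBI true (.unf (C.fill (pf Q)) R)) :
    FBI true (.unf (C.fill (nplus [Δ, pf (.shiftD (.imp P (.shiftU Q)))])) R) :=
  .downL_plus C hR (.impL C (.rfoc_of_unf h) (.upL C h'))

theorem FBI.unf_wandL (C : NCtx Leaf) (hR : R.Neutral) (h : FBI true (.unf Δ (.shiftU P)))
    (h' : FBI true (.unf (C.fill (pf Q)) R)) :
    FBI true (.unf (C.fill (ntimes [Δ, pf (.shiftD (.wand P (.shiftU Q)))])) R) :=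
  .downL_times C hR (.wandL₀ C (.rfoc_of_unf h) (.upL C h'))

theorem FBI.unf_wandL' (C : NCtx Leaf) (hR : R.Neutral) (h : FBI true (.unf Δ (.shiftU P)))
    (h' : FBI true (.unf (C.fill (ntimes [Δ', pf Q])) R)) :
    FBI true
      (.unf (C.fill (ntimes [Δ, Δ', nplus [Δ'', pf (.shiftD (.wand P (.shiftU Q)))]])) R) := by
  have hD (y : Nest Leaf) : NestEq ((C.comp (.times [Δ, Δ'] (.plus [Δ''] .hole))).fill y)
      (C.fill (ntimes [Δ, Δ', nplus [Δ'', y]])) := by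
    rw [NCtx.fill_comp]
    exact C.fill_congr (ntimes_congr ((NListPerm.cons (nplus_comm y Δ'') (.refl _)).trans
      (.of_perm (List.perm_append_comm (l₁ := [_]) (l₂ := [Δ, Δ'])))))
  refine .downL_of_nestEq (X := fun y => C.fill (ntimes [Δ, Δ', nplus [Δ'', y]])) _ hD hR
    (.wandL C (.rfoc_of_unf h) ?_)
  exact .upL_of_nestEq (X := fun y => C.fill (ntimes [Δ', y])) _ (C.nestEq_fill_comp_times Δ') h'

def Formula.toLeaf (pol : ℕ → Bool) (φ : Formula) : Leaf := .pos (φ.polarise pol)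

theorem NProof.polarise (pol : ℕ → Bool) {Γ : Nest Formula} {φ : Formula} (h : NProof Γ φ) :
    FBI true (.unf (Γ.map (Formula.toLeaf pol)) (.shiftU (φ.polarise pol))) := by
  induction h
  all_goals try simp only [Nest.map_fill, Nest.map_nplus, Nest.map_ntimes, List.map_cons,
    List.map_nil] at *
  case ax => exact PForm.Entails.refl _
  case axP => exact Replaces.nplus_append_right [_] _ .hole _ (PForm.Entails.refl _)
  case exch e ih => exact .exchU ih (e.map _)
  case contr ih => exact .contr _ ih
  case botL => exact .botL _ _
  case topR => exact .upR (.plus (by simp)) (.topPR _)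
  case topW => exact .cutP .hole (.topPR _) (PForm.Entails.refl .top)
  case unitR => exact .upR (.times (by simp)) (.unitR [])
  case unitW => exact .unf_of_rfoc (.unitR _)
  case unitL ih => exact .unitL _ ih
  case andL ih => exact .andPL _ ih
  case andR ih ih' => exact .unf_andPR ih ih'
  case orL ih ih' => exact .orL _ ih ih'
  case orR1 ih => exact .unf_orR1 ih
  case orR2 ih => exact .unf_orR2 ih
  case impL ih ih' => exact .unf_impL _ trivial ih ih'
  case impR ih => exact .unf_of_rfoc (.downR (.impR ih))
  case starL ih => exact .starL _ ih
  case starR ih ih' => exact .unf_starR ih ih'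
  case starR' ih ih' => exact .unf_of_rfoc (.starR _ (.rfoc_of_unf ih) (.rfoc_of_unf ih'))
  case wandL ih ih' => exact .unf_wandL _ trivial ih ih'
  case wandL' ih ih' => exact .unf_wandL' _ trivial ih ih'
  case wandR ih => exact .unf_of_rfoc (.downR (.wandR ih))

end Simulation

theorem replaces_map_toLeaf_dep (pol : ℕ → Bool) {Γ : Nest Leaf} (hpos : PosNest Γ)
    (hwf : Γ.WF) (hpol : Γ.All (Leaf.WFpol pol)) :
    Replaces Γ (Γ.map fun a => Formula.toLeaf pol a.dep) := by
  induction Γ using Nest.induction with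
  | frm a =>
    obtain ⟨hpos⟩ := hpos
    obtain ⟨hpol⟩ := hpol
    cases a with
    | pos P => exact .of_rfoc (.rfoc_of_unf (P.polarise_dep_interderivable pol hpol).1)
    | focN N => exact hpos.elim
  | plus l ih =>
    -- well-formedness makes `.plus l` the nest `nplus l`, whose entries contexts can reach
    rw [← hwf.nplus_eq, Nest.map_nplus]
    obtain _ | ⟨hpos⟩ := hpos
    obtain _ | ⟨hpol⟩ := hpol
    obtain _ | ⟨-, hwf, -⟩ := hwf
    exact Replaces.nplus_of_forall₂ (List.forall₂_map_right_iff.mpr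
      (List.forall₂_same.mpr fun x hx => ih x hx (hpos x hx) (hwf x hx) (hpol x hx)))
  | times l ih =>
    rw [← hwf.ntimes_eq, Nest.map_ntimes]
    obtain _ | _ | ⟨hpos⟩ := hpos
    obtain _ | _ | ⟨hpol⟩ := hpol
    obtain _ | _ | ⟨-, hwf, -⟩ := hwf
    exact Replaces.ntimes_of_forall₂ (List.forall₂_map_right_iff.mpr
      (List.forall₂_same.mpr fun x hx => ih x hx (hpos x hx) (hwf x hx) (hpol x hx)))

/-- **Completeness of FBI+cut (Lemma 12)**: for any well-formed unfocused
polarised sequent `Γ ⊢ N`, if the depolarised nested sequent `⌊Γ⌋ ⊢ ⌊N⌋` is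
provable in ηLBI, then `Γ ⊢ N` is provable in FBI+cut. -/
theorem FBIcut_complete (pol : ℕ → Bool) (Γ : Nest Leaf) (N : NForm)
    (hpos : PosNest Γ) (hwf : Γ.WF) (hpolΓ : Γ.All (Leaf.WFpol pol))
    (hpolN : N.WFpol pol) :
    NProof (Nest.map Leaf.dep Γ) N.dep → FBI true (.unf Γ N) := by
  intro h
  have hsim := h.polarise pol
  rw [Nest.map_map] at hsim
  have hΓ := replaces_map_toLeaf_dep pol hpos hwf hpolΓ .hole _ hsim
  have hN := (N.polarise_dep_interderivable pol hpolN).2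
  exact (hΓ.unf_shiftU_of_entails hN).unf_of_unf_shiftU_shiftD

end BIPaper
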